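/- Let n and b be natural numbers with b even and b ≥ 2. Then the Frobenius number of SF(b,n) is b^((b+1)·b^n) − 1, and the genus of SF(b,n), i.e., the cardinality of ℕ \ SF(b,n), is b^((b+1)·b^n)/2. -/

import Mathlib

/-!
Put `q = b ^ b ^ n`, so the generators are `q ^ b ^ i + 1`. Since `q ≡ -1 [MOD q + 1]` and `b ^ i`
is even for `i ≥ 1`, every generator beyond the first is `≡ q ^ b + 1`, and being larger it lies in
`⟨q + 1, q ^ b + 1⟩`; hence `SF(b, n) = ⟨q + 1, q ^ b + 1⟩`. These two generators are coprime
(`q + 1` is odd and `q ^ b + 1 ≡ 2`), so Sylvester's theorem gives the Frobenius number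
`(q + 1)(q ^ b + 1) - (q + 1) - (q ^ b + 1) = q ^ (b + 1) - 1`, and a two-generated numerical
semigroup is symmetric, so exactly half of `0, …, q ^ (b + 1) - 1` are gaps.
-/

/-- The Fermat numerical semigroup base `b`: the additive submonoid of ℕ generated by
`{b^(b^(n+i)) + 1 : i ∈ ℕ}`. -/
def fermatSemigroup (b n : ℕ) : AddSubmonoid ℕ :=
  AddSubmonoid.closure {m : ℕ | ∃ i : ℕ, m = b ^ (b ^ (n + i)) + 1}

open Finset in
/-- `x ↦ F - x` swaps the gaps and the elements in `[0, F]`. -/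
theorem AddSubmonoid.two_mul_ncard_compl_of_sub_mem (S : AddSubmonoid ℕ) {F : ℕ}
    (hF : IsGreatest {x | x ∉ S} F) (hsymm : ∀ x ≤ F, x ∉ S → F - x ∈ S) :
    2 * {x | x ∉ S}.ncard = F + 1 := by
  classical
  set gaps := {x ∈ range (F + 1) | x ∉ S}
  set elems := {x ∈ range (F + 1) | x ∈ S}
  have hgaps : {x | x ∉ S} = gaps := by
    ext x
    simpa [gaps] using fun hx => Nat.lt_succ_of_le (hF.2 hx)
  have hswap : #gaps = #elems := by
    refine card_nbij' (F - ·) (F - ·) ?_ ?_ ?_ ?_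
    · intro x hx
      simp only [gaps, elems, coe_filter, mem_range, Set.mem_ofPred_eq] at hx ⊢
      exact ⟨by omega, hsymm x (by omega) hx.2⟩
    · intro x hx
      simp only [gaps, elems, coe_filter, mem_range, Set.mem_ofPred_eq] at hx ⊢
      refine ⟨by omega, fun hFx => hF.1 ?_⟩
      simpa [Nat.sub_add_cancel (by omega : x ≤ F)] using S.add_mem hFx hx.2
    all_goals
      intro x hx
      simp only [gaps, elems, coe_filter, mem_range, Set.mem_ofPred_eq] at hx
      show F - (F - x) = x
      omega
  have hsplit : #elems + #gaps = F + 1 :=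
    (card_filter_add_card_filter_not _).trans (card_range _)
  rw [hgaps, Set.ncard_coe_finset]
  omega

namespace Nat.Coprime

variable {m k : ℕ}

lemma exists_eq_mul_add_mul_of_lt (cop : m.Coprime k) (hm : 0 < m) (x : ℤ) :
    ∃ a t : ℤ, 0 ≤ t ∧ t < m ∧ x = a * m + t * k := by
  have bezout : (1 : ℤ) = m * m.gcdA k + k * m.gcdB k := by
    rw [← Nat.gcd_eq_gcd_ab, cop.gcd_eq_one, Nat.cast_one]
  refine ⟨x * m.gcdA k + x * m.gcdB k / m * k, x * m.gcdB k % m,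
    Int.emod_nonneg _ (by omega), Int.emod_lt_of_pos _ (by omega), ?_⟩
  have := Int.emod_add_mul_ediv (x * m.gcdB k) m
  linear_combination x * bezout - k * this

/-- Write `x = a * m + t * k` with `0 ≤ t < m`: then `x` is a gap only if `a < 0`, and then
`m * k - m - k - x = (-1 - a) * m + (m - 1 - t) * k`. -/
lemma sub_mem_closure_pair_of_notMem (cop : m.Coprime k) (hm : 1 < m) (hk : 1 < k) {x : ℕ}
    (hx : x ≤ m * k - m - k) (hxS : x ∉ AddSubmonoid.closure {m, k}) :
    m * k - m - k - x ∈ AddSubmonoid.closure {m, k} := by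
  obtain ⟨a, t, ht0, htm, hxat⟩ := cop.exists_eq_mul_add_mul_of_lt (by omega) x
  have ha : a < 0 := by
    by_contra! ha
    refine hxS ((AddSubmonoid.mem_closure_pair ..).2 ⟨a.toNat, t.toNat, ?_⟩)
    zify
    push_cast [smul_eq_mul, Int.toNat_of_nonneg ha, Int.toNat_of_nonneg ht0]
    exact hxat.symm
  refine (AddSubmonoid.mem_closure_pair ..).2 ⟨(-1 - a).toNat, (m - 1 - t).toNat, ?_⟩
  have hmk : m + k ≤ m * k := Nat.add_le_mul hm hk
  have hcast : ((m * k - m - k - x : ℕ) : ℤ) = m * k - m - k - x := by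
    have := Nat.cast_mul (α := ℤ) m k
    omega
  apply Nat.cast_injective (R := ℤ)
  rw [hcast]
  push_cast [smul_eq_mul, Int.toNat_of_nonneg (by omega : 0 ≤ -1 - a),
    Int.toNat_of_nonneg (by omega : 0 ≤ (m : ℤ) - 1 - t)]
  linear_combination hxat

theorem two_mul_ncard_notMem_closure_pair (cop : m.Coprime k) (hm : 1 < m) (hk : 1 < k) :
    2 * {x | x ∉ AddSubmonoid.closure {m, k}}.ncard = (m - 1) * (k - 1) := by
  rw [AddSubmonoid.two_mul_ncard_compl_of_sub_mem _ (frobeniusNumber_pair cop hm hk)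
    fun _ hx hxS => cop.sub_mem_closure_pair_of_notMem hm hk hx hxS]
  obtain ⟨m, rfl⟩ := Nat.exists_eq_add_of_lt hm
  obtain ⟨k, rfl⟩ := Nat.exists_eq_add_of_lt hk
  simp only [Nat.add_sub_cancel]
  ring_nf
  omega

end Nat.Coprime

lemma Nat.pow_modEq_one_of_even (q : ℕ) {e : ℕ} (he : Even e) : q ^ e ≡ 1 [MOD q + 1] := by
  rw [← ZMod.natCast_eq_natCast_iff]
  have hq : (q : ZMod (q + 1)) = -1 :=
    eq_neg_of_add_eq_zero_left (by exact_mod_cast ZMod.natCast_self (q + 1))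
  push_cast
  rw [hq, he.neg_one_pow]

lemma Nat.coprime_add_one_pow_add_one {q e : ℕ} (hq : Even q) (he : Even e) :
    (q + 1).Coprime (q ^ e + 1) := by
  have h2 : q ^ e + 1 ≡ 2 [MOD q + 1] := (Nat.pow_modEq_one_of_even q he).add_right 1
  rw [Nat.Coprime, Nat.gcd_comm, h2.gcd_eq]
  exact Nat.coprime_two_left.mpr hq.add_one

lemma pow_add_one_mem_closure_pair {q e f : ℕ} (hq : 0 < q) (he : Even e) (hf : Even f)
    (hef : e ≤ f) : q ^ f + 1 ∈ AddSubmonoid.closure {q + 1, q ^ e + 1} := by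
  have hle : q ^ e ≤ q ^ f := Nat.pow_le_pow_right hq hef
  obtain ⟨c, hc⟩ := (Nat.modEq_iff_dvd' hle).mp
    ((Nat.pow_modEq_one_of_even q he).trans (Nat.pow_modEq_one_of_even q hf).symm)
  refine (AddSubmonoid.mem_closure_pair ..).2 ⟨c, 1, ?_⟩
  rw [smul_eq_mul, one_smul, mul_comm, ← hc]
  omega

theorem fermatSemigroup_eq_closure_pair (n : ℕ) {b : ℕ} (hb : 0 < b) (hbe : Even b) :
    fermatSemigroup b n =
      AddSubmonoid.closure {b ^ (b ^ n) + 1, (b ^ (b ^ n)) ^ b + 1} := by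
  have hq : 0 < b ^ (b ^ n) := pow_pos hb _
  refine le_antisymm (AddSubmonoid.closure_le.2 ?_) (AddSubmonoid.closure_le.2 ?_)
  · rintro _ ⟨i, rfl⟩
    rw [pow_add, pow_mul]
    rcases i with _ | i
    · exact AddSubmonoid.subset_closure (by simp)
    · exact pow_add_one_mem_closure_pair hq hbe (hbe.pow_of_ne_zero (by omega))
        (Nat.le_self_pow (by omega) b)
  · rintro _ (rfl | rfl)
    · exact AddSubmonoid.subset_closure ⟨0, by rw [add_zero]⟩
    · exact AddSubmonoid.subset_closure ⟨1, by rw [← pow_mul, ← pow_succ]⟩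

theorem fermat_frobenius_genus (n b : ℕ) (hb : 2 ≤ b) (hbe : Even b) :
    IsGreatest {m : ℕ | m ∉ fermatSemigroup b n} (b ^ ((b + 1) * b ^ n) - 1) ∧
    2 * Set.ncard {m : ℕ | m ∉ fermatSemigroup b n} = b ^ ((b + 1) * b ^ n) := by
  rw [fermatSemigroup_eq_closure_pair n (by omega) hbe]
  set q := b ^ (b ^ n) with hq_def
  have hq : 0 < q := pow_pos (by omega) _
  have hqb : 0 < q ^ b := pow_pos hq _
  have cop : (q + 1).Coprime (q ^ b + 1) :=
    Nat.coprime_add_one_pow_add_one (hbe.pow_of_ne_zero (by positivity)) hbe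
  have hprod : q * q ^ b = b ^ ((b + 1) * b ^ n) := by
    rw [hq_def, ← pow_succ', ← pow_mul, mul_comm]
  have hfrob : (q + 1) * (q ^ b + 1) - (q + 1) - (q ^ b + 1) = b ^ ((b + 1) * b ^ n) - 1 := by
    rw [← hprod, show (q + 1) * (q ^ b + 1) = q * q ^ b + q + q ^ b + 1 by ring]
    omega
  refine ⟨hfrob ▸ frobeniusNumber_pair cop (by omega) (by omega), ?_⟩
  rw [cop.two_mul_ncard_notMem_closure_pair (by omega) (by omega), ← hprod]
  simp
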